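/- Mixed second derivative of the coupled energy term: for h(x₀, xᵢ) = (L(x₀) − l(xᵢ))² with L(x₀) ≠ 0 and l(xᵢ) ≠ 0, the mixed Hessian block ∂²h/∂xᵢ∂x₀ equals (−2/(L(x₀)·l(xᵢ))) · δ(x₀) δ(xᵢ)ᵀ. -/

import Mathlib

noncomputable def trussL (x : Fin 4 → ℝ) : ℝ :=
  Real.sqrt ((x 0 - x 2) ^ 2 + (x 1 - x 3) ^ 2)

def trussδ (x : Fin 4 → ℝ) : Fin 4 → ℝ :=
  ![x 0 - x 2, x 1 - x 3, x 2 - x 0, x 3 - x 1]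

/-! Differentiating `(f y - g z) ^ 2` first in `z` and then in `y` leaves `-2 f'(y) g'(z)`, since
the factor `f y - g z` is the only one depending on `y`. For the truss length
`L x = √((x₀ - x₂)² + (x₁ - x₃)²)` the radicand is `⟪δ x, x⟫`, whose derivative is `2 ⟪δ x, ·⟫`,
so `L'(x) = ⟪δ x, ·⟫ / L x` wherever `L x ≠ 0`. -/

section MixedDerivative

variable {𝕜 E F : Type*} [NontriviallyNormedField 𝕜] [NormedAddCommGroup E] [NormedSpace 𝕜 E]
  [NormedAddCommGroup F] [NormedSpace 𝕜 F]

theorem fderiv_sub_sq_apply {g : F → 𝕜} {x : F} (hg : DifferentiableAt 𝕜 g x) (c : 𝕜) (v : F) :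
    fderiv 𝕜 (fun z => (c - g z) ^ 2) x v = -2 * (c - g x) * fderiv 𝕜 g x v := by
  rw [((hg.hasFDerivAt.const_sub c).pow 2).fderiv]
  simp only [smul_apply, neg_apply, smul_eq_mul]
  push_cast
  ring

theorem fderiv_fderiv_sub_sq_apply {f : E → 𝕜} {g : F → 𝕜} {x₀ : E} {x : F}
    (hf : DifferentiableAt 𝕜 f x₀) (hg : DifferentiableAt 𝕜 g x) (v : F) (w : E) :
    fderiv 𝕜 (fun y => fderiv 𝕜 (fun z => (f y - g z) ^ 2) x v) x₀ w =
      -2 * fderiv 𝕜 f x₀ w * fderiv 𝕜 g x v := by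
  simp only [fderiv_sub_sq_apply hg]
  rw [(((hf.hasFDerivAt.sub_const (g x)).const_mul (-2)).mul_const (fderiv 𝕜 g x v)).fderiv]
  simp only [smul_apply, smul_eq_mul]
  ring

end MixedDerivative

theorem hasFDerivAt_trussL {x : Fin 4 → ℝ} (hx : trussL x ≠ 0) :
    HasFDerivAt trussL
      ((trussL x)⁻¹ • ∑ k, trussδ x k • (ContinuousLinearMap.proj k : (Fin 4 → ℝ) →L[ℝ] ℝ)) x := by
  have hq : HasFDerivAt (fun y : Fin 4 → ℝ => (y 0 - y 2) ^ 2 + (y 1 - y 3) ^ 2)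
      ((2 : ℝ) • ∑ k, trussδ x k • (ContinuousLinearMap.proj k : (Fin 4 → ℝ) →L[ℝ] ℝ)) x := by
    have h := fun i : Fin 4 => hasFDerivAt_apply (𝕜 := ℝ) i x
    refine ((((h 0).sub (h 2)).pow 2).add (((h 1).sub (h 3)).pow 2)).congr_fderiv ?_
    ext v
    simp only [Pi.sub_apply, Nat.add_one_sub_one, pow_one, nsmul_eq_mul, Nat.cast_ofNat, add_apply,
      smul_apply, sub_apply, ContinuousLinearMap.proj_apply, smul_eq_mul, trussδ, Fin.sum_univ_four,
      Matrix.cons_val_zero, Matrix.cons_val_one, Matrix.cons_val, smul_add]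
    ring
  have hpos : (x 0 - x 2) ^ 2 + (x 1 - x 3) ^ 2 ≠ 0 := fun h => hx (by simp [trussL, h])
  refine ((Real.hasDerivAt_sqrt hpos).comp_hasFDerivAt x hq).congr_fderiv ?_
  rw [smul_smul, ← trussL]
  congr 1
  field_simp

theorem fderiv_trussL_apply {x : Fin 4 → ℝ} (hx : trussL x ≠ 0) (v : Fin 4 → ℝ) :
    fderiv ℝ trussL x v = (∑ k, trussδ x k * v k) / trussL x := by
  simp [(hasFDerivAt_trussL hx).fderiv, div_eq_inv_mul]

/-- Mixed second derivative of the coupled energy term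
`h(x₀, xᵢ) = (L(x₀) − l(xᵢ))²`: the mixed Hessian block `∂²h/∂xᵢ∂x₀` equals
`(−2/(L(x₀) l(xᵢ))) δ(x₀) δ(xᵢ)ᵀ` as a bilinear form. -/
theorem coupled_energy_mixed_hessian (x₀ xᵢ : Fin 4 → ℝ)
    (hx₀ : trussL x₀ ≠ 0) (hxᵢ : trussL xᵢ ≠ 0) :
    ∀ v w : Fin 4 → ℝ,
      fderiv ℝ (fun y₀ =>
          fderiv ℝ (fun yᵢ => (trussL y₀ - trussL yᵢ) ^ 2) xᵢ v) x₀ w =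
        (-2 / (trussL x₀ * trussL xᵢ)) *
          ((∑ k, trussδ x₀ k * w k) * (∑ k, trussδ xᵢ k * v k)) := by
  intro v w
  rw [fderiv_fderiv_sub_sq_apply (hasFDerivAt_trussL hx₀).differentiableAt
    (hasFDerivAt_trussL hxᵢ).differentiableAt, fderiv_trussL_apply hx₀, fderiv_trussL_apply hxᵢ]
  ring
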